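/- arXiv:2010.08458 — 2 statements merged into one kernel-verified Lean document; each statement's English description precedes it below -/
import Mathlib

section
/- For every real s, the Legendre–Fenchel conjugate C of C* satisfies C(s) = sup_{ζ∈ℝ} (s·ζ − C*(ζ)) ≥ (1/2)|s|·log(1 + |s|). -/
noncomputable def Cstar (ζ : ℝ) : ℝ := 4 * Real.cosh (ζ / 2) - 4

noncomputable def Cfn (s : ℝ) : ℝ := ⨆ ζ : ℝ, (s * ζ - Cstar ζ)

theorem cfn_lower_bound (s : ℝ) :
    Cfn s ≥ (1 / 2) * |s| * Real.log (1 + |s|) := by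
  have hbdd : BddAbove (Set.range fun ζ : ℝ => s * ζ - Cstar ζ) := by
    refine ⟨2 * s ^ 2 + 4, ?_⟩
    rintro _ ⟨ζ, rfl⟩
    have h1 : |ζ| / 4 + 1 ≤ Real.exp (|ζ| / 4) := Real.add_one_le_exp _
    have h2 : Real.exp (|ζ| / 2) = Real.exp (|ζ| / 4) * Real.exp (|ζ| / 4) := by
      rw [← Real.exp_add]; ring_nf
    have h3 : Real.exp (|ζ| / 2) / 2 ≤ Real.cosh (ζ / 2) := by
      rw [← Real.cosh_abs, Real.cosh_eq, abs_div, abs_two]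
      have := (Real.exp_pos (-(|ζ| / 2))).le
      linarith
    have h4 : s * ζ ≤ |s| * |ζ| := by
      calc s * ζ ≤ |s * ζ| := le_abs_self _
        _ = |s| * |ζ| := abs_mul s ζ
    have h5 : (0:ℝ) ≤ |ζ| := abs_nonneg ζ
    have h6 : (0:ℝ) ≤ |s| := abs_nonneg s
    have h7 : |s| ^ 2 = s ^ 2 := sq_abs s
    simp only [Cstar]
    nlinarith [sq_nonneg (|ζ| / 4 - |s|), sq_nonneg (|ζ| / 4 + 1)]
  set x := |s| with hx
  have hx0 : (0:ℝ) ≤ x := abs_nonneg s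
  set t := Real.sqrt (1 + x) with htdef
  have ht1 : (1:ℝ) ≤ t := by
    rw [htdef, Real.one_le_sqrt]; linarith
  have ht0 : (0:ℝ) < t := by linarith
  have ht2 : t ^ 2 = 1 + x := Real.sq_sqrt (by linarith)
  have hlogt : Real.log (1 + x) = 2 * Real.log t := by
    rw [htdef, Real.log_sqrt (by linarith)]; ring
  have hlog1 : 1 - 1 / t ≤ Real.log t := by
    have := Real.log_le_sub_one_of_pos (x := 1 / t) (by positivity)
    rw [Real.log_div one_ne_zero ht0.ne', Real.log_one] at this
    have h1t : (1:ℝ)/t ≤ 1 := by rw [div_le_one ht0]; exact ht1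
    linarith
  have hlog0 : 0 ≤ Real.log t := Real.log_nonneg ht1
  set ζ₀ : ℝ := if 0 ≤ s then Real.log (1 + x) else -Real.log (1 + x) with hζ₀
  have hsz : s * ζ₀ = x * Real.log (1 + x) := by
    rcases le_or_gt 0 s with h | h
    · rw [hζ₀, if_pos h, hx, abs_of_nonneg h]
    · rw [hζ₀, if_neg (not_le.mpr h), hx, abs_of_neg h]; ring
  have hcosh : Real.cosh (ζ₀ / 2) = (t + 1 / t) / 2 := by
    have hc : Real.cosh (Real.log (1 + x) / 2) = (t + 1 / t) / 2 := by
      have : Real.log (1 + x) / 2 = Real.log t := by rw [hlogt]; ring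
      rw [this, Real.cosh_eq, Real.exp_log ht0, Real.exp_neg, Real.exp_log ht0,
        one_div]
    rcases le_or_gt 0 s with h | h
    · rw [hζ₀, if_pos h]; exact hc
    · rw [hζ₀, if_neg (not_le.mpr h)]
      rw [show -Real.log (1 + x) / 2 = -(Real.log (1 + x) / 2) by ring,
        Real.cosh_neg]
      exact hc
  have key : s * ζ₀ - Cstar ζ₀ ≥ 1 / 2 * x * Real.log (1 + x) := by
    rw [hsz, Cstar, hcosh, hlogt]
    have hxt : x = t ^ 2 - 1 := by linarith
    rw [hxt]
    have hmul : (1 - 1 / t) * (t * (t ^ 2 - 1)) ≤ Real.log t * (t * (t ^ 2 - 1)) := by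
      apply mul_le_mul_of_nonneg_right hlog1
      nlinarith
    have hinv : t * (1 / t) = 1 := mul_one_div_cancel ht0.ne'
    nlinarith [mul_pos ht0 ht0, sq_nonneg (t - 1), mul_nonneg (sq_nonneg (t-1)) (sub_nonneg.mpr ht1)]
  calc Cfn s ≥ s * ζ₀ - Cstar ζ₀ := le_ciSup hbdd ζ₀
    _ ≥ 1 / 2 * x * Real.log (1 + x) := key
end

section
/- Let E(c) = Σ_i c*_i λ_B(c_i/c*_i) on the closed orthant [0,∞)^n with c* ∈ (0,∞)^n, and let C_q = {c ∈ [0,∞)^n : Q c = q} for a linear map Q: ℝ^n → ℝ^m and q ∈ Q([0,∞)^n). Then E attains a unique minimizer on C_q. -/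
noncomputable def lamBr (r : ℝ) : ℝ := r * Real.log r - r + 1

/-!
`lamBr` is Mathlib's `klFun`, so `E` is strictly convex on the closed orthant, as a positively
weighted sum of rescaled copies of a strictly convex function. Since `klFun` lies above its
tangent line at `e`, `E c ≥ ‖c‖ - const` on the orthant; hence `E` tends to infinity away from
compact sets there, and attains its infimum on every nonempty closed subset of the orthant. Strict
convexity makes the minimizer on the convex set `C_q` unique.
-/

open Set Filter InformationTheory

lemma lamBr_eq_klFun : lamBr = klFun := by
  funext r
  rw [lamBr, klFun_apply]
  ring

lemma add_one_sub_exp_one_le_klFun {r : ℝ} (hr : 0 ≤ r) : r + 1 - Real.exp 1 ≤ klFun r := by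
  rcases hr.eq_or_lt with rfl | hr
  · simp [klFun_zero, (Real.exp_pos 1).le]
  · have h := Real.add_one_le_exp (1 - Real.log r)
    rw [Real.exp_sub, Real.exp_log hr, le_div_iff₀ hr] at h
    rw [klFun_apply]
    linarith

lemma StrictConvexOn.const_mul_comp_div {f : ℝ → ℝ} (hf : StrictConvexOn ℝ (Ici 0) f) {a : ℝ}
    (ha : 0 < a) : StrictConvexOn ℝ (Ici 0) fun x => a * f (x / a) := by
  refine ⟨convex_Ici 0, fun x hx y hy hxy s t hs ht hst => ?_⟩
  have hdiv : ∀ z ∈ Ici (0 : ℝ), z / a ∈ Ici 0 := fun z hz => div_nonneg hz ha.le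
  have key := hf.2 (hdiv x hx) (hdiv y hy) (by rwa [Ne, div_left_inj' ha.ne']) hs ht hst
  simp only [smul_eq_mul] at key ⊢
  rw [show (s * x + t * y) / a = s * (x / a) + t * (y / a) by ring]
  nlinarith [mul_lt_mul_of_pos_left key ha]

lemma strictConvexOn_sum_apply {ι : Type*} [Fintype ι] {E : ι → Type*}
    [∀ i, AddCommGroup (E i)] [∀ i, Module ℝ (E i)] {s : ∀ i, Set (E i)} {f : ∀ i, E i → ℝ}
    (hf : ∀ i, StrictConvexOn ℝ (s i) (f i)) :
    StrictConvexOn ℝ (univ.pi s) fun x => ∑ i, f i (x i) := by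
  refine ⟨convex_pi fun i _ => (hf i).1, fun x hx y hy hxy a b ha hb hab => ?_⟩
  obtain ⟨j, hj⟩ := Function.ne_iff.mp hxy
  rw [mem_univ_pi] at hx hy
  simp only [smul_eq_mul, Finset.mul_sum, ← Finset.sum_add_distrib]
  exact Finset.sum_lt_sum (fun i _ => (hf i).convexOn.2 (hx i) (hy i) ha.le hb.le hab)
    ⟨j, Finset.mem_univ j, (hf j).2 (hx j) (hy j) hj ha hb hab⟩

lemma ContinuousOn.existsUnique_isMinOn_of_strictConvexOn {E : Type*} [TopologicalSpace E]
    [AddCommGroup E] [Module ℝ E] {f : E → ℝ} {s : Set E} (hf : ContinuousOn f s)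
    (hsc : IsClosed s) (hne : s.Nonempty) (hconv : StrictConvexOn ℝ s f)
    (hcoerc : Tendsto f (cocompact E ⊓ 𝓟 s) atTop) : ∃! x, x ∈ s ∧ IsMinOn f s x := by
  obtain ⟨x₀, hx₀⟩ := hne
  obtain ⟨x, hx, hmin⟩ := hf.exists_isMinOn' hsc hx₀ (hcoerc.eventually_ge_atTop (f x₀))
  exact ⟨x, ⟨hx, hmin⟩, fun y ⟨hy, hymin⟩ => hconv.eq_of_isMinOn hymin hmin hy hx⟩

section FreeEnergy

variable {ι : Type*} [Fintype ι] {cstar : ι → ℝ}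

abbrev orthant (ι : Type*) : Set (ι → ℝ) := univ.pi fun _ => Ici 0

noncomputable def freeEnergy (cstar c : ι → ℝ) : ℝ := ∑ i, cstar i * klFun (c i / cstar i)

lemma continuous_freeEnergy : Continuous (freeEnergy cstar) := by
  unfold freeEnergy
  fun_prop

lemma strictConvexOn_freeEnergy (hcstar : ∀ i, 0 < cstar i) :
    StrictConvexOn ℝ (orthant ι) (freeEnergy cstar) :=
  strictConvexOn_sum_apply fun i => strictConvexOn_klFun.const_mul_comp_div (hcstar i)

lemma norm_le_sum_of_mem_orthant {c : ι → ℝ} (hc : c ∈ orthant ι) : ‖c‖ ≤ ∑ i, c i := by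
  rw [mem_univ_pi] at hc
  refine (pi_norm_le_iff_of_nonneg (Finset.sum_nonneg fun i _ => hc i)).2 fun i => ?_
  rw [Real.norm_of_nonneg (hc i)]
  exact Finset.single_le_sum (fun j _ => hc j) (Finset.mem_univ i)

lemma norm_add_le_freeEnergy (hcstar : ∀ i, 0 < cstar i) {c : ι → ℝ} (hc : c ∈ orthant ι) :
    ‖c‖ + ∑ i, cstar i * (1 - Real.exp 1) ≤ freeEnergy cstar c := by
  refine (add_le_add_left (norm_le_sum_of_mem_orthant hc) _).trans ?_
  rw [← Finset.sum_add_distrib, freeEnergy]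
  refine Finset.sum_le_sum fun i _ => ?_
  have hci : c i / cstar i ∈ Ici 0 := div_nonneg (mem_univ_pi.1 hc i) (hcstar i).le
  have := mul_le_mul_of_nonneg_left (add_one_sub_exp_one_le_klFun hci) (hcstar i).le
  rw [mul_sub, mul_add, mul_div_cancel₀ _ (hcstar i).ne'] at this
  linarith

lemma tendsto_freeEnergy_cocompact_inf_orthant (hcstar : ∀ i, 0 < cstar i) :
    Tendsto (freeEnergy cstar) (cocompact (ι → ℝ) ⊓ 𝓟 (orthant ι)) atTop := by
  have hnorm : Tendsto (fun c : ι → ℝ => ‖c‖ + ∑ i, cstar i * (1 - Real.exp 1))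
      (cocompact (ι → ℝ)) atTop :=
    tendsto_atTop_add_const_right _ _ tendsto_norm_cocompact_atTop
  refine tendsto_atTop_mono' _ ?_ (hnorm.mono_left inf_le_left)
  exact eventually_inf_principal.2 (.of_forall fun _ => norm_add_le_freeEnergy hcstar)

lemma existsUnique_isMinOn_freeEnergy (hcstar : ∀ i, 0 < cstar i) {s : Set (ι → ℝ)}
    (hs : s ⊆ orthant ι) (hsc : IsClosed s) (hconv : Convex ℝ s) (hne : s.Nonempty) :
    ∃! x, x ∈ s ∧ IsMinOn (freeEnergy cstar) s x :=
  continuous_freeEnergy.continuousOn.existsUnique_isMinOn_of_strictConvexOn hsc hne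
    ((strictConvexOn_freeEnergy hcstar).subset hs hconv)
    ((tendsto_freeEnergy_cocompact_inf_orthant hcstar).mono_left
      (inf_le_inf_left _ (principal_mono.2 hs)))

end FreeEnergy

theorem unique_minimizer_on_stoichiometric_subset (n m : ℕ)
    (cstar : Fin n → ℝ) (hcstar : ∀ i, 0 < cstar i)
    (Q : (Fin n → ℝ) →ₗ[ℝ] (Fin m → ℝ)) (q : Fin m → ℝ)
    (hq : ∃ c : Fin n → ℝ, (∀ i, 0 ≤ c i) ∧ Q c = q)
    (E : (Fin n → ℝ) → ℝ)
    (hE : ∀ c, E c = ∑ i, cstar i * lamBr (c i / cstar i)) :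
    ∃! chat : Fin n → ℝ,
      ((∀ i, 0 ≤ chat i) ∧ Q chat = q) ∧
        ∀ c : Fin n → ℝ, (∀ i, 0 ≤ c i) → Q c = q → E chat ≤ E c := by
  obtain rfl : E = freeEnergy cstar := funext fun c => by rw [hE, freeEnergy, lamBr_eq_klFun]
  have hclosed : IsClosed (orthant (Fin n) ∩ Q ⁻¹' {q}) :=
    (isClosed_set_pi fun _ _ => isClosed_Ici).inter
      (isClosed_singleton.preimage Q.continuous_of_finiteDimensional)
  have hconv : Convex ℝ (orthant (Fin n) ∩ Q ⁻¹' {q}) :=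
    (convex_pi fun _ _ => convex_Ici 0).inter ((convex_singleton q).linear_preimage Q)
  obtain ⟨c₀, hc₀, hQc₀⟩ := hq
  have hmin := existsUnique_isMinOn_freeEnergy hcstar inter_subset_left hclosed hconv
    ⟨c₀, mem_univ_pi.2 hc₀, hQc₀⟩
  simpa only [isMinOn_iff, mem_inter_iff, mem_univ_pi, mem_Ici, mem_preimage, mem_singleton_iff,
    and_imp] using hmin
end
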